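/- arXiv:1901.02272 — 3 statements merged into one kernel-verified Lean document; each statement's English description precedes it below -/
import Mathlib

section
/- Let w ∈ ℤ^n, c ∈ ℤ₊^n with w·c = 0, and define S₋, S₀, S₊ as the sets of x ∈ {0,1}^n_3 with w·x negative, zero, positive respectively, and d := c + ∑_{x∈S₊} x. If there exists H ⊆ {0,1}^n_3 with ∑_{x∈H} x = d, then G := H ∩ S₀ satisfies ∑_{x∈G} x = c. -/
/-!
Pairing with `w` turns the hypothesis into `∑_{x ∈ H} w·x = ∑_{x ∈ S₊} w·x`, since `w·c = 0`.
Summing over `{0,1}^n_3 ⊇ H`, each term `[x ∈ H] w·x` is at most `max (w·x) 0`, so equality of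
the sums forces equality termwise: `H` avoids `S₋` and contains `S₊`. Hence `H` is the disjoint
union of `G` and `S₊`, and cancelling `∑_{x ∈ S₊} x` leaves `∑_{x ∈ G} x = c`.
-/

open Finset

/-- The set of 0-1 vectors in ℤ^n with exactly `k` ones. -/
def cube (n k : ℕ) : Finset (Fin n → ℤ) :=
  ((Finset.univ : Finset (Fin n → Fin 2)).image (fun f i => ((f i : ℕ) : ℤ))).filter
    (fun x => ∑ i, x i = (k : ℤ))

/-- Standard inner product on ℤ^n. -/
def dot {n : ℕ} (w x : Fin n → ℤ) : ℤ := ∑ i, w i * x i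

theorem Finset.filter_ne_zero_eq_filter_pos_of_sum_eq {ι M : Type*}
    [AddCommGroup M] [LinearOrder M] [IsOrderedAddMonoid M] {f : ι → M} {s t : Finset ι}
    (hst : s ⊆ t) (h : ∑ x ∈ s, f x = ∑ x ∈ t with 0 < f x, f x) :
    {x ∈ s | f x ≠ 0} = {x ∈ t | 0 < f x} := by
  classical
  have hle : ∀ x ∈ t, (if x ∈ s then f x else 0) ≤ if 0 < f x then f x else 0 := by
    intro x _
    split_ifs <;> order
  have heq : ∀ x ∈ t, (if x ∈ s then f x else 0) = if 0 < f x then f x else 0 := by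
    refine (sum_eq_sum_iff_of_le hle).1 ?_
    rwa [← sum_filter, ← sum_filter, filter_mem_eq_inter, inter_eq_right.2 hst]
  ext x
  simp only [mem_filter]
  constructor
  · rintro ⟨hxs, hx⟩
    have := heq x (hst hxs)
    split_ifs at this <;> grind
  · rintro ⟨hxt, hpos⟩
    have := heq x hxt
    split_ifs at this <;> grind

theorem dot_sum {n : ℕ} (w : Fin n → ℤ) (s : Finset (Fin n → ℤ)) :
    dot w (∑ x ∈ s, x) = ∑ x ∈ s, dot w x :=
  dotProduct_sum w s id

theorem dot_add {n : ℕ} (w x y : Fin n → ℤ) : dot w (x + y) = dot w x + dot w y :=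
  dotProduct_add w x y

theorem stmt_5_general (n : ℕ) (w c : Fin n → ℤ) (hwc : dot w c = 0)
    (H : Finset (Fin n → ℤ)) (hH : H ⊆ cube n 3)
    (hHd : ∑ x ∈ H, x = c + ∑ x ∈ (cube n 3).filter (fun x => 0 < dot w x), x) :
    ∑ x ∈ H ∩ (cube n 3).filter (fun x => dot w x = 0), x = c := by
  have hdot : ∑ x ∈ H, dot w x = ∑ x ∈ cube n 3 with 0 < dot w x, dot w x := by
    rw [← dot_sum, hHd, dot_add, hwc, zero_add, dot_sum]
  have hG : H ∩ {x ∈ cube n 3 | dot w x = 0} = {x ∈ H | dot w x = 0} := by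
    ext x
    simp only [mem_inter, mem_filter]
    exact ⟨fun ⟨hx, _, h0⟩ => ⟨hx, h0⟩, fun ⟨hx, h0⟩ => ⟨hx, hH hx, h0⟩⟩
  rw [← sum_filter_add_sum_filter_not H (fun x => dot w x = 0),
    filter_ne_zero_eq_filter_pos_of_sum_eq hH hdot] at hHd
  rw [hG]
  exact add_right_cancel hHd

theorem stmt_5 (n : ℕ) (w c : Fin n → ℤ) (hc : ∀ i, 0 ≤ c i) (hwc : dot w c = 0)
    (H : Finset (Fin n → ℤ)) (hH : H ⊆ cube n 3)
    (hHd : ∑ x ∈ H, x = c + ∑ x ∈ (cube n 3).filter (fun x => 0 < dot w x), x) :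
    ∑ x ∈ H ∩ (cube n 3).filter (fun x => dot w x = 0), x = c :=
  stmt_5_general n w c hwc H hH hHd
end

section
/- Let w ∈ ℤ^n, c ∈ ℤ₊^n with w·c = 0, S₀ := {x ∈ {0,1}^n_3 : w·x = 0}, S₊ := {x ∈ {0,1}^n_3 : w·x > 0}, and d := c + ∑_{x∈S₊} x. Then there exists G ⊆ S₀ with ∑_{x∈G} x = c if and only if there exists H ⊆ {0,1}^n_3 with ∑_{x∈H} x = d. -/
/-! A linear functional `f` with `f c = 0` takes the value `∑_{S₊} f` on the sum of `H ⊆ U`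
only if `H` contains every vector of `U` on which `f` is positive and no vector on which it is
negative, since every other subset of `U` has a strictly smaller `f`-sum. Such an `H` is then
`S₊ ⊔ G` with `G ⊆ S₀` and `∑ G = c`; conversely `G ∪ S₊` is a disjoint union. -/

open Finset

lemma filter_pos_subset_and_eq_zero_of_sum_eq {α N : Type*} [DecidableEq α] [AddCommGroup N]
    [LinearOrder N] [IsOrderedAddMonoid N] {U H : Finset α} {g : α → N} (hH : H ⊆ U)
    (hsum : ∑ x ∈ H, g x = ∑ x ∈ U.filter (0 < g ·), g x) :
    U.filter (0 < g ·) ⊆ H ∧ ∀ x ∈ H \ U.filter (0 < g ·), g x = 0 := by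
  set P := U.filter (0 < g ·)
  have hgap : ∑ x ∈ P \ H, g x + ∑ x ∈ H \ P, -g x = 0 := by
    rw [sum_neg_distrib, ← sub_eq_add_neg, sum_sdiff_sub_sum_sdiff, hsum, sub_self]
  have hP : ∀ x ∈ P \ H, 0 ≤ g x := fun x hx => (mem_filter.1 (mem_sdiff.1 hx).1).2.le
  have hHP : ∀ x ∈ H \ P, 0 ≤ -g x := fun x hx => by
    obtain ⟨hxH, hxP⟩ := mem_sdiff.1 hx
    exact neg_nonneg.2 (not_lt.1 fun hpos => hxP (mem_filter.2 ⟨hH hxH, hpos⟩))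
  rw [add_eq_zero_iff_of_nonneg (sum_nonneg hP) (sum_nonneg hHP),
    sum_eq_zero_iff_of_nonneg hP, sum_eq_zero_iff_of_nonneg hHP] at hgap
  refine ⟨fun x hxP => by_contra fun hxH => ?_, fun x hx => neg_eq_zero.1 (hgap.2 x hx)⟩
  exact (mem_filter.1 hxP).2.ne' (hgap.1 x (mem_sdiff.2 ⟨hxP, hxH⟩))

theorem exists_subset_filter_eq_zero_sum_eq_iff {M N : Type*} [AddCommGroup M] [DecidableEq M]
    [AddCommGroup N] [LinearOrder N] [IsOrderedAddMonoid N] (f : M →+ N) (U : Finset M) {c : M}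
    (hc : f c = 0) :
    (∃ G ⊆ U.filter (f · = 0), ∑ x ∈ G, x = c) ↔
      ∃ H ⊆ U, ∑ x ∈ H, x = c + ∑ x ∈ U.filter (0 < f ·), x := by
  constructor
  · rintro ⟨G, hG, rfl⟩
    refine ⟨G ∪ U.filter (0 < f ·),
      union_subset (hG.trans (filter_subset _ _)) (filter_subset _ _),
      sum_union (disjoint_left.2 fun x hxG hxP => ?_)⟩
    exact (mem_filter.1 hxP).2.ne' (mem_filter.1 (hG hxG)).2
  · rintro ⟨H, hH, hHsum⟩
    have hfsum : ∑ x ∈ H, f x = ∑ x ∈ U.filter (0 < f ·), f x := by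
      simpa only [map_sum, map_add, hc, zero_add] using congrArg f hHsum
    obtain ⟨hPH, hzero⟩ := filter_pos_subset_and_eq_zero_of_sum_eq hH hfsum
    refine ⟨H \ U.filter (0 < f ·),
      fun x hx => mem_filter.2 ⟨hH (mem_sdiff.1 hx).1, hzero x hx⟩, ?_⟩
    rw [sum_sdiff_eq_sub hPH, hHsum, add_sub_cancel_right]

def dotHom {n : ℕ} (w : Fin n → ℤ) : (Fin n → ℤ) →+ ℤ :=
  AddMonoidHom.mk' (dot w) fun a b => by simp only [dot, Pi.add_apply, mul_add, sum_add_distrib]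

theorem stmt_6_general (n : ℕ) (w c : Fin n → ℤ) (hwc : dot w c = 0) :
    (∃ G ⊆ (cube n 3).filter (fun x => dot w x = 0), ∑ x ∈ G, x = c) ↔
      (∃ H ⊆ cube n 3,
        ∑ x ∈ H, x = c + ∑ x ∈ (cube n 3).filter (fun x => 0 < dot w x), x) :=
  exists_subset_filter_eq_zero_sum_eq_iff (dotHom w) (cube n 3) hwc

theorem stmt_6 (n : ℕ) (w c : Fin n → ℤ) (hc : ∀ i, 0 ≤ c i) (hwc : dot w c = 0) :
    (∃ G ⊆ (cube n 3).filter (fun x => dot w x = 0), ∑ x ∈ G, x = c) ↔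
      (∃ H ⊆ cube n 3,
        ∑ x ∈ H, x = c + ∑ x ∈ (cube n 3).filter (fun x => 0 < dot w x), x) :=
  stmt_6_general n w c hwc
end

section
/- If d ∈ ℤ₊^n is the degree sequence of a graph on [n] with d₁ ≥ d₂ ≥ ... ≥ d_n, then for all 1 ≤ j ≤ l ≤ n, the inequality ∑_{i=1}^j d_i − ∑_{i=l+1}^n d_i ≤ j(l−1) holds. -/
open Finset

/-! Write `d(A) - d(Cᶜ)` as a sum over edges. An edge contributes at most the number of pairs
`(i, k)` with `i ∈ A`, `k ∈ C \ {i}` that are both its endpoints, so summing over edges bounds the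
difference by the sum of the codegrees of these pairs. Two distinct vertices lie on at most one
edge, whence `d(A) - d(Cᶜ) ≤ |A| (|C| - 1)` for all `A ⊆ C`; take `A` the first `j` and `C` the
first `l` vertices. -/

section Cube

variable {n k : ℕ} {x y : Fin n → ℤ}

theorem eq_zero_or_eq_one_of_mem_cube (hx : x ∈ cube n k) (i : Fin n) : x i = 0 ∨ x i = 1 := by
  simp only [cube, mem_filter, mem_image, mem_univ, true_and] at hx
  obtain ⟨⟨f, rfl⟩, -⟩ := hx
  have : (f i : ℕ) = 0 ∨ (f i : ℕ) = 1 := by omega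
  rcases this with h | h <;> simp [h]

theorem sum_eq_of_mem_cube (hx : x ∈ cube n k) : ∑ i, x i = k :=
  (mem_filter.mp hx).2

theorem nonneg_of_mem_cube (hx : x ∈ cube n k) (i : Fin n) : 0 ≤ x i := by
  rcases eq_zero_or_eq_one_of_mem_cube hx i with h | h <;> simp [h]

theorem mul_self_of_mem_cube (hx : x ∈ cube n k) (i : Fin n) : x i * x i = x i := by
  rcases eq_zero_or_eq_one_of_mem_cube hx i with h | h <;> simp [h]

theorem eq_zero_of_mem_cube_two (hx : x ∈ cube n 2) {i k : Fin n} (hik : i ≠ k)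
    (hi : x i = 1) (hk : x k = 1) : ∀ m ∈ ({i, k} : Finset (Fin n))ᶜ, x m = 0 := by
  have hsum := sum_eq_of_mem_cube hx
  rw [← sum_add_sum_compl {i, k}, sum_pair hik, hi, hk] at hsum
  push_cast at hsum
  exact (sum_eq_zero_iff_of_nonneg fun m _ => nonneg_of_mem_cube hx m).mp (by linarith)

theorem eq_of_mem_cube_two (hx : x ∈ cube n 2) (hy : y ∈ cube n 2) {i k : Fin n} (hik : i ≠ k)
    (hxi : x i = 1) (hxk : x k = 1) (hyi : y i = 1) (hyk : y k = 1) : x = y := by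
  funext m
  by_cases hm : m ∈ ({i, k} : Finset (Fin n))
  · rcases mem_insert.mp hm with rfl | hm
    · rw [hxi, hyi]
    · rw [mem_singleton.mp hm, hxk, hyk]
  · rw [eq_zero_of_mem_cube_two hx hik hxi hxk m (mem_compl.mpr hm),
      eq_zero_of_mem_cube_two hy hik hyi hyk m (mem_compl.mpr hm)]

end Cube

def codegree {n : ℕ} (H : Finset (Fin n → ℤ)) (i k : Fin n) : ℤ := ∑ x ∈ H, x i * x k

theorem codegree_le_one {n : ℕ} {H : Finset (Fin n → ℤ)} (hH : H ⊆ cube n 2) {i k : Fin n}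
    (hik : i ≠ k) : codegree H i k ≤ 1 := by
  have hterm : ∀ x ∈ H, x i * x k = if x i = 1 ∧ x k = 1 then 1 else 0 := by
    intro x hx
    rcases eq_zero_or_eq_one_of_mem_cube (hH hx) i with h | h <;>
      rcases eq_zero_or_eq_one_of_mem_cube (hH hx) k with h' | h' <;> simp [h, h']
  have hcard : #{x ∈ H | x i = 1 ∧ x k = 1} ≤ 1 := card_le_one.mpr fun x hx y hy => by
    rw [mem_filter] at hx hy
    exact eq_of_mem_cube_two (hH hx.1) (hH hy.1) hik hx.2.1 hx.2.2 hy.2.1 hy.2.2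
  rw [codegree, sum_congr rfl hterm, sum_boole]
  exact_mod_cast hcard

/-- For a single edge `x`, with `a = x(A)`, `b = x(Cᶜ)` and `x(C) = 2 - b`, the right-hand side
is `a (1 - b)`, and `a ≤ 2 - b` forces `a b ≤ b`. -/
theorem sub_le_sum_mul_of_mem_cube_two {n : ℕ} {x : Fin n → ℤ} (hx : x ∈ cube n 2)
    {A C : Finset (Fin n)} (hAC : A ⊆ C) :
    ∑ i ∈ A, x i - ∑ i ∈ Cᶜ, x i ≤ ∑ i ∈ A, ∑ k ∈ C.erase i, x i * x k := by
  set a := ∑ i ∈ A, x i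
  set b := ∑ i ∈ Cᶜ, x i
  have hCb : ∑ i ∈ C, x i + b = 2 := by
    rw [sum_add_sum_compl, sum_eq_of_mem_cube hx]; rfl
  have hb : 0 ≤ b := sum_nonneg fun i _ => nonneg_of_mem_cube hx i
  have haC : a ≤ ∑ i ∈ C, x i :=
    sum_le_sum_of_subset_of_nonneg hAC fun i _ _ => nonneg_of_mem_cube hx i
  have hrhs : ∑ i ∈ A, ∑ k ∈ C.erase i, x i * x k = a * (1 - b) := by
    calc ∑ i ∈ A, ∑ k ∈ C.erase i, x i * x k
        = ∑ i ∈ A, (x i * (2 - b) - x i) := sum_congr rfl fun i hi => by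
          rw [← mul_sum, sum_erase_eq_sub (hAC hi), mul_sub, mul_self_of_mem_cube hx, ← hCb]
          ring
      _ = a * (1 - b) := by rw [sum_sub_distrib, ← sum_mul]; ring
  rw [hrhs]
  rcases (show b = 0 ∨ 1 ≤ b by omega) with hb0 | hb1
  · simp [hb0]
  · nlinarith

theorem sum_degree_sub_sum_degree_compl_le {n : ℕ} {H : Finset (Fin n → ℤ)}
    (hH : H ⊆ cube n 2) {A C : Finset (Fin n)} (hAC : A ⊆ C) :
    ∑ i ∈ A, (∑ x ∈ H, x) i - ∑ i ∈ Cᶜ, (∑ x ∈ H, x) i ≤ #A * ((#C : ℤ) - 1) := by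
  calc ∑ i ∈ A, (∑ x ∈ H, x) i - ∑ i ∈ Cᶜ, (∑ x ∈ H, x) i
      = ∑ x ∈ H, (∑ i ∈ A, x i - ∑ i ∈ Cᶜ, x i) := by
        simp only [Finset.sum_apply, sum_sub_distrib]
        congr 1 <;> exact sum_comm
    _ ≤ ∑ x ∈ H, ∑ i ∈ A, ∑ k ∈ C.erase i, x i * x k :=
        sum_le_sum fun x hx => sub_le_sum_mul_of_mem_cube_two (hH hx) hAC
    _ = ∑ i ∈ A, ∑ k ∈ C.erase i, codegree H i k := by
        rw [sum_comm]
        refine sum_congr rfl fun i _ => ?_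
        rw [sum_comm]
        rfl
    _ ≤ ∑ i ∈ A, ∑ k ∈ C.erase i, (1 : ℤ) :=
        sum_le_sum fun i _ => sum_le_sum fun k hk => codegree_le_one hH (ne_of_mem_erase hk).symm
    _ = #A * ((#C : ℤ) - 1) := by
        rw [← nsmul_eq_mul, ← sum_const]
        refine sum_congr rfl fun i hi => ?_
        rw [sum_const, card_erase_of_mem (hAC hi), nsmul_one,
          Nat.cast_sub (card_pos.mpr ⟨i, hAC hi⟩), Nat.cast_one]

theorem stmt_14_general (n : ℕ) (d : Fin n → ℤ) (H : Finset (Fin n → ℤ)) (hH : H ⊆ cube n 2)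
    (hd : ∑ x ∈ H, x = d) :
    ∀ j l : ℕ, 1 ≤ j → j ≤ l → l ≤ n →
      (∑ i ∈ Finset.univ.filter (fun i : Fin n => (i : ℕ) < j), d i) -
        (∑ i ∈ Finset.univ.filter (fun i : Fin n => l ≤ (i : ℕ)), d i) ≤
      (j : ℤ) * ((l : ℤ) - 1) := by
  intro j l _ hjl hln
  have hAC : univ.filter (fun i : Fin n => (i : ℕ) < j) ⊆ univ.filter fun i => (i : ℕ) < l :=
    fun i hi => by simp only [mem_filter, mem_univ, true_and] at hi ⊢; omega
  have key := sum_degree_sub_sum_degree_compl_le hH hAC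
  rw [compl_filter, Fin.card_filter_val_lt, Fin.card_filter_val_lt, min_eq_right hln,
    min_eq_right (hjl.trans hln), hd] at key
  simpa only [not_lt] using key

theorem stmt_14 (n : ℕ) (d : Fin n → ℤ) (H : Finset (Fin n → ℤ)) (hH : H ⊆ cube n 2)
    (hd : ∑ x ∈ H, x = d) (hsort : ∀ i j : Fin n, i ≤ j → d j ≤ d i) :
    ∀ j l : ℕ, 1 ≤ j → j ≤ l → l ≤ n →
      (∑ i ∈ Finset.univ.filter (fun i : Fin n => (i : ℕ) < j), d i) -
        (∑ i ∈ Finset.univ.filter (fun i : Fin n => l ≤ (i : ℕ)), d i) ≤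
      (j : ℤ) * ((l : ℤ) - 1) :=
  stmt_14_general n d H hH hd
end
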